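/- Let φ(z) = (z² − 1)/(2z), extended to ℙ¹(ℚ) = ℚ ∪ {∞} by φ(0) = ∞ and φ(∞) = ∞. Then the set of rational preperiodic points of φ is exactly {0, ∞, 1, −1}, with orbit structure: ∞ is a fixed point, φ(0) = ∞, and φ(1) = φ(−1) = 0. -/

import Mathlib

/-!
The argument is 2-adic. If `v₂(z) ≠ 0` then `v₂(z² − 1) = min(2 v₂(z), 0)` and
`v₂(2z) = v₂(z) + 1`, so `v₂(φ z) = −|v₂(z)| − 1`: along the orbit of such a point `|v₂|`
grows by one at every step, and the orbit is infinite. If `v₂(z) = 0` then `z = a/b` with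
`a, b` odd, so `4 ∣ a² − b²` and `v₂(φ z) ≥ 1` unless `z = ±1`. Hence every rational point
other than `0, ±1` reaches a point with `v₂ ≠ 0` within one step, while `±1 ↦ 0 ↦ ∞ ↦ ∞`.
-/

/-- The map `φ(z) = (z² − 1)/(2z)` on `ℙ¹(ℚ)`, with `φ(0) = ∞` and
`φ(∞) = ∞`. -/
def phi17 : Option ℚ → Option ℚ
  | none => none
  | some x => if x = 0 then none else some ((x ^ 2 - 1) / (2 * x))

/-- A point is preperiodic for a self-map `f` if two distinct iterates of `f`
agree on it, i.e. its forward orbit is finite. -/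
def IsPreperiodicPt {X : Type*} (f : X → X) (α : X) : Prop :=
  ∃ i j : ℕ, i < j ∧ f^[i] α = f^[j] α

open Function

section Preperiodic

variable {X : Type*} {f : X → X} {x : X}

theorem IsPreperiodicPt.apply (h : IsPreperiodicPt f x) : IsPreperiodicPt f (f x) := by
  obtain ⟨i, j, hij, hx⟩ := h
  exact ⟨i, j, hij, by simpa only [← iterate_succ_apply, iterate_succ_apply'] using congrArg f hx⟩

theorem isPreperiodicPt_of_isFixedPt_iterate {n : ℕ} (h : IsFixedPt f (f^[n] x)) :
    IsPreperiodicPt f x :=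
  ⟨n, n + 1, n.lt_succ_self, by rw [iterate_succ_apply', h]⟩

theorem not_isPreperiodicPt_of_lt_map {α : Type*} [Preorder α] (h : X → α) (c : α)
    (hf : ∀ y, c < h y → h y < h (f y)) (hx : c < h x) : ¬ IsPreperiodicPt f x := by
  have hc : ∀ n, c < h (f^[n] x) := by
    intro n
    induction n with
    | zero => exact hx
    | succ n ih => rw [iterate_succ_apply']; exact ih.trans (hf _ ih)
  have hmono : StrictMono fun n => h (f^[n] x) :=
    strictMono_nat_of_lt_succ fun n => by simpa only [iterate_succ_apply'] using hf _ (hc n)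
  rintro ⟨i, j, hij, hx⟩
  exact (hmono hij).ne (congrArg h hx)

end Preperiodic

theorem Rat.odd_num_and_odd_den_of_padicValRat_two_eq_zero {q : ℚ} (hq : q ≠ 0)
    (hv : padicValRat 2 q = 0) : Odd q.num ∧ Odd q.den := by
  have hn : q.num.natAbs ≠ 0 := by simpa using hq
  rw [padicValRat_def, padicValInt, sub_eq_zero, Nat.cast_inj] at hv
  have hden : padicValNat 2 q.den = 0 := by
    by_contra h
    exact Nat.not_coprime_of_dvd_of_dvd one_lt_two (dvd_of_one_le_padicValNat (by omega))
      (dvd_of_one_le_padicValNat (by omega)) q.reduced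
  rw [hden, padicValNat.eq_zero_iff] at hv
  rw [padicValNat.eq_zero_iff] at hden
  rw [← Int.natAbs_odd, ← Nat.not_even_iff_odd, ← Nat.not_even_iff_odd, even_iff_two_dvd,
    even_iff_two_dvd]
  exact ⟨(hv.resolve_left (by norm_num)).resolve_left hn,
    (hden.resolve_left (by norm_num)).resolve_left q.den_nz⟩

theorem padicValRat_two_two : padicValRat 2 2 = 1 := by
  simpa using padicValRat.self (p := 2) one_lt_two

theorem padicValRat_two_sq_sub_one_div_of_ne_zero {q : ℚ} (hv : padicValRat 2 q ≠ 0) :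
    padicValRat 2 ((q ^ 2 - 1) / (2 * q)) = -|padicValRat 2 q| - 1 := by
  have hq : q ≠ 0 := by rintro rfl; exact hv padicValRat.zero
  have hsq : padicValRat 2 (q ^ 2) = 2 * padicValRat 2 q := by
    rw [padicValRat.pow]; norm_num
  have hsq1 : q ^ 2 - 1 ≠ 0 := by
    intro h
    rw [sub_eq_zero] at h
    rw [h, padicValRat.one] at hsq
    omega
  have hnum : padicValRat 2 (q ^ 2 - 1) = min (2 * padicValRat 2 q) 0 := by
    rw [sub_eq_add_neg, padicValRat.add_eq_min (by rwa [← sub_eq_add_neg]) (pow_ne_zero 2 hq)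
      (by norm_num) (by rw [hsq, padicValRat.neg, padicValRat.one]; omega), hsq,
      padicValRat.neg, padicValRat.one]
  have hden : padicValRat 2 (2 * q) = 1 + padicValRat 2 q := by
    rw [padicValRat.mul two_ne_zero hq, padicValRat_two_two]
  rw [padicValRat.div hsq1 (mul_ne_zero two_ne_zero hq), hnum, hden]
  rcases hv.lt_or_gt with h | h
  · rw [abs_of_neg h, min_eq_left (by omega)]; ring
  · rw [abs_of_pos h, min_eq_right (by omega)]; ring

theorem padicValRat_two_sq_sub_one_div_pos {q : ℚ} (hq : q ≠ 0) (hv : padicValRat 2 q = 0)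
    (hq1 : q ^ 2 ≠ 1) : 0 < padicValRat 2 ((q ^ 2 - 1) / (2 * q)) := by
  obtain ⟨hn, hd⟩ := Rat.odd_num_and_odd_den_of_padicValRat_two_eq_zero hq hv
  set N : ℤ := q.num ^ 2 - (q.den : ℤ) ^ 2 with hNdef
  have hsq : q ^ 2 - 1 = (N : ℚ) / (q.den : ℚ) ^ 2 := by
    conv_lhs => rw [← Rat.num_div_den q]
    field_simp
    push_cast [hNdef]
    ring
  have hN : N ≠ 0 := by
    rintro h
    rw [h, Int.cast_zero, zero_div, sub_eq_zero] at hsq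
    exact hq1 hsq
  have h4 : (2 : ℤ) ^ 2 ∣ N :=
    Int.ModEq.dvd (n := 4) ((Int.sq_mod_four_eq_one_of_odd ((Int.odd_coe_nat _).mpr hd)).trans
      (Int.sq_mod_four_eq_one_of_odd hn).symm)
  have hvN : 2 ≤ padicValInt 2 N := ((padicValInt_dvd_iff 2 N).mp h4).resolve_left hN
  have hvd : padicValNat 2 q.den = 0 :=
    padicValNat.eq_zero_of_not_dvd (even_iff_two_dvd.not.mp (Nat.not_even_iff_odd.mpr hd))
  rw [padicValRat.div (sub_ne_zero.mpr hq1) (mul_ne_zero two_ne_zero hq), hsq,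
    padicValRat.div (by exact_mod_cast hN) (by simp), padicValRat.of_int, padicValRat.pow,
    padicValRat.of_nat, hvd, padicValRat.mul two_ne_zero hq, padicValRat_two_two, hv]
  omega

/-- Both `∞` and `0` get the value `0` (the latter because `padicValRat 2 0 = 0`). -/
def natAbsPadicValTwo : Option ℚ → ℕ
  | none => 0
  | some q => (padicValRat 2 q).natAbs

theorem natAbsPadicValTwo_phi17 {x : Option ℚ} (hx : natAbsPadicValTwo x ≠ 0) :
    natAbsPadicValTwo (phi17 x) = natAbsPadicValTwo x + 1 := by
  cases x with
  | none => exact absurd rfl hx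
  | some q =>
    have hv : padicValRat 2 q ≠ 0 := by simpa [natAbsPadicValTwo] using hx
    have hq : q ≠ 0 := by rintro rfl; exact hv padicValRat.zero
    rw [phi17, if_neg hq, natAbsPadicValTwo, natAbsPadicValTwo, padicValRat_two_sq_sub_one_div_of_ne_zero hv,
      Int.abs_eq_natAbs]
    omega

theorem not_isPreperiodicPt_phi17 {x : Option ℚ} (hx : 0 < natAbsPadicValTwo x) :
    ¬ IsPreperiodicPt phi17 x :=
  not_isPreperiodicPt_of_lt_map natAbsPadicValTwo 0
    (fun _ hy => by rw [natAbsPadicValTwo_phi17 hy.ne']; omega) hx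

theorem natAbsPadicValTwo_pos_or_phi17_pos {q : ℚ} (hq : q ≠ 0 ∧ q ≠ 1 ∧ q ≠ -1) :
    0 < natAbsPadicValTwo (some q) ∨ 0 < natAbsPadicValTwo (phi17 (some q)) := by
  obtain ⟨hq0, hq1, hqm1⟩ := hq
  by_cases hv : padicValRat 2 q = 0
  · right
    have hsq : q ^ 2 ≠ 1 := by rw [Ne, sq_eq_one_iff]; tauto
    simp only [phi17, if_neg hq0, natAbsPadicValTwo]
    exact Int.natAbs_pos.mpr (padicValRat_two_sq_sub_one_div_pos hq0 hv hsq).ne'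
  · left
    exact Int.natAbs_pos.mpr hv

/-- The set of rational preperiodic points of `φ(z) = (z² − 1)/(2z)` is
exactly `{0, ∞, 1, −1}`, with `∞` fixed, `φ(0) = ∞`, and
`φ(1) = φ(−1) = 0`. -/
theorem phi17_preperiodic_points :
    {α : Option ℚ | IsPreperiodicPt phi17 α} =
        ({some 0, none, some 1, some (-1)} : Set (Option ℚ)) ∧
      phi17 none = none ∧ phi17 (some 0) = none ∧
      phi17 (some 1) = some 0 ∧ phi17 (some (-1)) = some 0 := by
  have h0 : phi17 (some 0) = none := by simp [phi17]
  have h1 : phi17 (some 1) = some 0 := by norm_num [phi17]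
  have hm1 : phi17 (some (-1)) = some 0 := by norm_num [phi17]
  refine ⟨?_, rfl, h0, h1, hm1⟩
  ext x
  simp only [Set.mem_ofPred_eq, Set.mem_insert_iff, Set.mem_singleton_iff]
  constructor
  · intro hx
    rcases x with _ | q
    · simp
    · by_contra hq
      simp only [Option.some.injEq, reduceCtorEq, false_or, not_or] at hq
      rcases natAbsPadicValTwo_pos_or_phi17_pos hq with h | h
      exacts [not_isPreperiodicPt_phi17 h hx, not_isPreperiodicPt_phi17 h hx.apply]
  · rintro (rfl | rfl | rfl | rfl)
    · exact isPreperiodicPt_of_isFixedPt_iterate (n := 1) (by simpa [h0])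
    · exact isPreperiodicPt_of_isFixedPt_iterate (n := 0) rfl
    · exact isPreperiodicPt_of_isFixedPt_iterate (n := 2) (by simpa [h1, h0])
    · exact isPreperiodicPt_of_isFixedPt_iterate (n := 2) (by simpa [hm1, h0])
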